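/- Let α₀,α₁,α₂,α₃,α₄ be real parameters with α₃ = α₄, and let y, z : I → ℝ be three-times differentiable functions on an open interval I ⊆ (0,1) containing 1/2, solving the Hamiltonian system (9) with y(1/2) = 1/2 and z(1/2) = 0. Then y'(1/2) = 1 − α₀, z'(1/2) = 4α₂(α₁+α₂), y''(1/2) = 0, and z''(1/2) = 0. -/

import Mathlib

/-!
At `t = 1/2` the coefficient `t(t-1)` of (9) equals `-1/4`, so evaluating (9) there gives the
first derivatives. When `α₃ = α₄`, the point `(t, y, z) = (1/2, 1/2, 0)` is a critical point of
both right-hand sides of (9), and the derivative `2t - 1` of `t(t-1)` vanishes at `t = 1/2`;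
differentiating (9) once at `t = 1/2` therefore gives `-y''/4 = 0` and `-z''/4 = 0`.
-/

/-- `(y, z)` is a (differentiable) real solution of the Hamiltonian system (9) with
parameters `(a0, a1, a2, a3, a4)` on the set `I ⊆ ℝ`. -/
def IsRealHamSol (a0 a1 a2 a3 a4 : ℝ) (I : Set ℝ) (y z : ℝ → ℝ) : Prop :=
  ∀ t ∈ I, DifferentiableAt ℝ y t ∧ DifferentiableAt ℝ z t ∧
    t * (t - 1) * deriv y t =
      2 * y t * (y t - 1) * (y t - t) * z t - (a0 - 1) * y t * (y t - 1)
        - a3 * y t * (y t - t) - a4 * (y t - 1) * (y t - t) ∧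
    t * (t - 1) * deriv z t =
      -(y t * (y t - 1) + (y t - 1) * (y t - t) + y t * (y t - t)) * z t ^ 2
        + ((2 * y t - 1) * (a0 - 1) + (2 * y t - t) * a3 + (2 * y t - t - 1) * a4) * z t
        - (a1 + a2) * a2

open Filter Topology

section HamiltonianSystem

variable (a0 a1 a2 a3 a4 : ℝ)

-- The right-hand sides of (9): the equations in `IsRealHamSol` are definitionally
-- `t * (t - 1) * deriv y t = hamRhsY a0 a3 a4 t (y t) (z t)` and its analogue for `z`.
def hamRhsY (t y z : ℝ) : ℝ :=
  2 * y * (y - 1) * (y - t) * z - (a0 - 1) * y * (y - 1) - a3 * y * (y - t)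
    - a4 * (y - 1) * (y - t)

def hamRhsZ (t y z : ℝ) : ℝ :=
  -(y * (y - 1) + (y - 1) * (y - t) + y * (y - t)) * z ^ 2
    + ((2 * y - 1) * (a0 - 1) + (2 * y - t) * a3 + (2 * y - t - 1) * a4) * z - (a1 + a2) * a2

variable {a0 a1 a2 a3 a4} {y z : ℝ → ℝ} {y' z' : ℝ}

theorem hasDerivAt_hamRhsY_half (h34 : a3 = a4) (hy : HasDerivAt y y' (1 / 2))
    (hz : HasDerivAt z z' (1 / 2)) (hy0 : y (1 / 2) = 1 / 2) (hz0 : z (1 / 2) = 0) :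
    HasDerivAt (fun t => hamRhsY a0 a3 a4 t (y t) (z t)) 0 (1 / 2) := by
  have ht := hasDerivAt_id' (1 / 2 : ℝ)
  have h := (((((hy.const_mul 2).mul (hy.sub_const 1)).mul (hy.sub ht)).mul hz).sub
      ((hy.const_mul (a0 - 1)).mul (hy.sub_const 1))).sub
      ((hy.const_mul a3).mul (hy.sub ht)) |>.sub
      (((hy.sub_const 1).const_mul a4).mul (hy.sub ht))
  refine h.congr_deriv ?_
  simp only [Pi.mul_apply, Pi.sub_apply, hy0, hz0, h34]
  ring

theorem hasDerivAt_hamRhsZ_half (h34 : a3 = a4) (hy : HasDerivAt y y' (1 / 2))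
    (hz : HasDerivAt z z' (1 / 2)) (hy0 : y (1 / 2) = 1 / 2) (hz0 : z (1 / 2) = 0) :
    HasDerivAt (fun t => hamRhsZ a0 a1 a2 a3 a4 t (y t) (z t)) 0 (1 / 2) := by
  have ht := hasDerivAt_id' (1 / 2 : ℝ)
  have h := ((((hy.mul (hy.sub_const 1)).add ((hy.sub_const 1).mul (hy.sub ht))).add
        (hy.mul (hy.sub ht))).neg.mul (hz.pow 2)).add
      (((((hy.const_mul 2).sub_const 1).mul_const (a0 - 1)).add
          (((hy.const_mul 2).sub ht).mul_const a3) |>.add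
          ((((hy.const_mul 2).sub ht).sub_const 1).mul_const a4)).mul hz) |>.sub_const
      ((a1 + a2) * a2)
  refine h.congr_deriv ?_
  simp only [Pi.mul_apply, Pi.sub_apply, Pi.add_apply, Pi.neg_apply, hy0, hz0, h34]
  ring

end HamiltonianSystem

theorem hasDerivAt_mul_deriv_of_eventually_eq {f g : ℝ → ℝ} {t f'' g' : ℝ}
    (h : ∀ᶠ s in 𝓝 t, s * (s - 1) * deriv f s = g s) (hf : HasDerivAt (deriv f) f'' t)
    (hg : HasDerivAt g g' t) : (2 * t - 1) * deriv f t + t * (t - 1) * f'' = g' := by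
  have hc : HasDerivAt (fun s : ℝ => s * (s - 1)) (2 * t - 1) t := by
    refine ((hasDerivAt_id' t).mul ((hasDerivAt_id' t).sub_const 1)).congr_deriv ?_
    ring
  exact (hc.mul hf).unique (hg.congr_of_eventuallyEq h)

theorem deriv_deriv_half_eq_zero {f g : ℝ → ℝ}
    (h : ∀ᶠ s in 𝓝 (1 / 2), s * (s - 1) * deriv f s = g s)
    (hf : DifferentiableAt ℝ (deriv f) (1 / 2)) (hg : HasDerivAt g 0 (1 / 2)) :
    deriv (deriv f) (1 / 2) = 0 := by
  have := hasDerivAt_mul_deriv_of_eventually_eq h hf.hasDerivAt hg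
  linarith

theorem taylor_coefficients_S21_general (a0 a1 a2 a3 a4 : ℝ) (h34 : a3 = a4)
    (I : Set ℝ) (hIopen : IsOpen I) (hhalf : (1 / 2 : ℝ) ∈ I)
    (y z : ℝ → ℝ)
    (hsmooth : ∀ t ∈ I,
      DifferentiableAt ℝ y t ∧ DifferentiableAt ℝ (deriv y) t ∧
        DifferentiableAt ℝ (deriv (deriv y)) t ∧
      DifferentiableAt ℝ z t ∧ DifferentiableAt ℝ (deriv z) t ∧
        DifferentiableAt ℝ (deriv (deriv z)) t)
    (hyz : IsRealHamSol a0 a1 a2 a3 a4 I y z)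
    (hy0 : y (1 / 2) = 1 / 2) (hz0 : z (1 / 2) = 0) :
    deriv y (1 / 2) = 1 - a0 ∧
      deriv z (1 / 2) = 4 * a2 * (a1 + a2) ∧
      deriv (deriv y) (1 / 2) = 0 ∧
      deriv (deriv z) (1 / 2) = 0 := by
  have hI : ∀ᶠ t in 𝓝 (1 / 2 : ℝ), t ∈ I := hIopen.mem_nhds hhalf
  obtain ⟨hy, hz, hy_eq, hz_eq⟩ := hyz _ hhalf
  obtain ⟨-, hy', -, -, hz', -⟩ := hsmooth _ hhalf
  rw [hy0, hz0] at hy_eq hz_eq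
  refine ⟨by linarith, by linarith, ?_, ?_⟩
  · exact deriv_deriv_half_eq_zero (g := fun t => hamRhsY a0 a3 a4 t (y t) (z t))
      (hI.mono fun t ht => (hyz t ht).2.2.1) hy'
      (hasDerivAt_hamRhsY_half h34 hy.hasDerivAt hz.hasDerivAt hy0 hz0)
  · exact deriv_deriv_half_eq_zero (g := fun t => hamRhsZ a0 a1 a2 a3 a4 t (y t) (z t))
      (hI.mono fun t ht => (hyz t ht).2.2.2) hz'
      (hasDerivAt_hamRhsZ_half h34 hy.hasDerivAt hz.hasDerivAt hy0 hz0)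

/-- **Initial Taylor coefficients of the symmetric solution (S2-1).** Let `α₃ = α₄` and
let `(y, z)` be a three-times differentiable solution of the Hamiltonian system (9) on an
open interval `I ⊆ (0,1)` containing `1/2`, with `y(1/2) = 1/2` and `z(1/2) = 0`. Then
`y'(1/2) = 1 - α₀`, `z'(1/2) = 4α₂(α₁+α₂)`, `y''(1/2) = 0`, and `z''(1/2) = 0`. -/
theorem taylor_coefficients_S21 (a0 a1 a2 a3 a4 : ℝ) (h34 : a3 = a4)
    (I : Set ℝ) (hIopen : IsOpen I) (hIconn : I.OrdConnected)
    (hIsub : I ⊆ Set.Ioo (0 : ℝ) 1) (hhalf : (1 / 2 : ℝ) ∈ I)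
    (y z : ℝ → ℝ)
    (hsmooth : ∀ t ∈ I,
      DifferentiableAt ℝ y t ∧ DifferentiableAt ℝ (deriv y) t ∧
        DifferentiableAt ℝ (deriv (deriv y)) t ∧
      DifferentiableAt ℝ z t ∧ DifferentiableAt ℝ (deriv z) t ∧
        DifferentiableAt ℝ (deriv (deriv z)) t)
    (hyz : IsRealHamSol a0 a1 a2 a3 a4 I y z)
    (hy0 : y (1 / 2) = 1 / 2) (hz0 : z (1 / 2) = 0) :
    deriv y (1 / 2) = 1 - a0 ∧
      deriv z (1 / 2) = 4 * a2 * (a1 + a2) ∧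
      deriv (deriv y) (1 / 2) = 0 ∧
      deriv (deriv z) (1 / 2) = 0 :=
  taylor_coefficients_S21_general a0 a1 a2 a3 a4 h34 I hIopen hhalf y z hsmooth hyz hy0 hz0
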